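/- Let T be a bounded linear operator on H admitting a reduced A-adjoint T^♯. Then (1/4)·‖T^♯T + TT^♯‖_A ≤ (1/4)·(2ω_A(T)² + √((‖Re_A(T)‖_A² − ‖Im_A(T)‖_A²)² + 4‖Re_A(T)·Im_A(T)‖_A²)) ≤ ω_A(T)². -/

import Mathlib

open ContinuousLinearMap

variable {H : Type*} [NormedAddCommGroup H] [InnerProductSpace ℂ H] [CompleteSpace H]

/-- The seminorm on `H` induced by a positive operator `A`: `‖x‖_A = √⟨Ax,x⟩`. -/
noncomputable def vnA (A : H →L[ℂ] H) (x : H) : ℝ :=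
  Real.sqrt (RCLike.re (inner ℂ (A x) x : ℂ))

/-- The `A`-seminorm of an operator: `‖X‖_A = sup {‖Xx‖_A : ‖x‖_A = 1}`. -/
noncomputable def opnA (A : H →L[ℂ] H) (X : H →L[ℂ] H) : ℝ :=
  sSup ((fun x => vnA A (X x)) '' {x : H | vnA A x = 1})

/-- The `A`-numerical radius: `ω_A(X) = sup {|⟨Xx,x⟩_A| : ‖x‖_A = 1}`. -/
noncomputable def wA (A : H →L[ℂ] H) (X : H →L[ℂ] H) : ℝ :=
  sSup ((fun x => ‖(inner ℂ (A (X x)) x : ℂ)‖) '' {x : H | vnA A x = 1})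

/-- `S` is the reduced `A`-adjoint of `T`: `A ∘ S = T* ∘ A` and
`range S ⊆ closure (range A)`. -/
def IsReducedAdjA (A T S : H →L[ℂ] H) : Prop :=
  A ∘L S = (ContinuousLinearMap.adjoint T) ∘L A ∧
    Set.range S ⊆ closure (Set.range (A : H → H))

/-- `X` is `A`-selfadjoint: `A ∘ X = X* ∘ A`. -/
def IsSelfAdjA (A X : H →L[ℂ] H) : Prop :=
  A ∘L X = (ContinuousLinearMap.adjoint X) ∘L A

/-- `Re_A(T) = (T + T♯)/2`. -/
noncomputable def ReA (T Ts : H →L[ℂ] H) : H →L[ℂ] H := (2 : ℂ)⁻¹ • (T + Ts)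

/-- `Im_A(T) = (T - T♯)/(2i)`. -/
noncomputable def ImA (T Ts : H →L[ℂ] H) : H →L[ℂ] H := (2 * Complex.I)⁻¹ • (T - Ts)

/-!
With `P = √A` we have `⟨x, y⟩_A = ⟨P x, P y⟩` and `‖x‖_A = ‖P x‖`. Write `T = R + i J` with
`R = Re_A(T)`, `J = Im_A(T)`, both `A`-selfadjoint; then `T♯T + TT♯ = 2 (R² + J²)`.
Put `r = ‖R‖_A`, `s = ‖J‖_A`, `c = ‖RJ‖_A` and let `μ` be the largest eigenvalue of
`[[r², c], [c, s²]]`. Since `⟨Ra, Jb⟩_A = ⟨a, RJb⟩_A`, taking `a = Rx`, `b = Jx` gives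
`‖(R² + J²)x‖_A² ≤ μ (‖Rx‖_A² + ‖Jx‖_A²) = μ ⟨(R² + J²)x, x⟩_A ≤ μ ‖(R² + J²)x‖_A ‖x‖_A`,
so `‖T♯T + TT♯‖_A ≤ 2μ`. Polarization gives `r, s ≤ ω_A(T)`, and `c ≤ r s` gives `2μ ≤ 2 (r² + s²)`.

The suprema defining `‖·‖_A` and `ω_A` are junk (`0`) unless bounded, so we also need that an
`A`-selfadjoint `S` is `A`-bounded; this is Lax's argument
`‖Sx‖_A ^ 2 ^ n ≤ ‖x‖_A ^ (2 ^ n - 1) ‖S ^ 2 ^ n x‖_A`.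
-/

open scoped InnerProductSpace ComplexConjugate

theorem le_of_forall_pow_two_pow_le {q l K : ℝ} (hl : 0 ≤ l)
    (h : ∀ n : ℕ, q ^ 2 ^ n ≤ K * l ^ (2 ^ n - 1)) : q ≤ l := by
  by_contra! hlq
  rcases hl.eq_or_lt with rfl | hl
  · have h1 := h 1
    norm_num at h1
    nlinarith
  obtain ⟨n, hn⟩ := pow_unbounded_of_one_lt (K / q) ((one_lt_div hl).mpr hlq)
  have hN : n ≤ 2 ^ n - 1 := Nat.le_sub_one_of_lt n.lt_two_pow_self
  have hq0 : 0 < q := hl.trans hlq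
  have key : q * (q / l) ^ (2 ^ n - 1) ≤ K := by
    have hsplit : q ^ 2 ^ n = q * q ^ (2 ^ n - 1) := by
      rw [← pow_succ', Nat.sub_add_cancel Nat.one_le_two_pow]
    rw [div_pow, mul_div_assoc', div_le_iff₀ (pow_pos hl _), ← hsplit]
    exact h n
  have := (pow_le_pow_right₀ ((one_lt_div hl).mpr hlq).le hN).trans_lt' hn
  rw [div_lt_iff₀ hq0] at this
  linarith

theorem quadForm_le_of_eigenvalue (α β c u v : ℝ) :
    α * u ^ 2 + β * v ^ 2 + 2 * c * (u * v) ≤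
      (α + β + √((α - β) ^ 2 + 4 * c ^ 2)) / 2 * (u ^ 2 + v ^ 2) := by
  set E := √((α - β) ^ 2 + 4 * c ^ 2)
  have hE2 : E ^ 2 = (α - β) ^ 2 + 4 * c ^ 2 := Real.sq_sqrt (by positivity)
  rcases (Real.sqrt_nonneg _ : 0 ≤ E).eq_or_lt with hE | hE
  · have hαβ : α = β := by nlinarith
    have hc : c = 0 := by nlinarith
    subst hαβ hc
    rw [show E = 0 from hE.symm]
    linarith
  · nlinarith [sq_nonneg ((β - α + E) * u - 2 * c * v), sq_nonneg ((α - β + E) * v - 2 * c * u)]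

theorem ContinuousLinearMap.IsPositive.inner_apply_eq_inner_sqrt {A : H →L[ℂ] H}
    (hA : A.IsPositive) (x y : H) :
    ⟪A x, y⟫_ℂ = ⟪CFC.sqrt A x, CFC.sqrt A y⟫_ℂ := by
  conv_lhs => rw [← CFC.sqrt_mul_sqrt_self A ((nonneg_iff_isPositive A).mpr hA),
    mul_apply_eq_comp]
  rw [← adjoint_inner_left, (IsSelfAdjoint.of_nonneg (CFC.sqrt_nonneg A)).adjoint_eq]

theorem exists_eq_smul_of_norm_apply_ne_zero {E F : Type*} [NormedAddCommGroup E] [NormedSpace ℂ E]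
    [NormedAddCommGroup F] [NormedSpace ℂ F] {P : E →L[ℂ] F} {x : E} (hx : ‖P x‖ ≠ 0) :
    ∃ t : ℝ, 0 < t ∧ ∃ y, ‖P y‖ = 1 ∧ x = t • y := by
  refine ⟨‖P x‖, (norm_nonneg _).lt_of_ne' hx, ‖P x‖⁻¹ • x, ?_,
    by rw [smul_smul, mul_inv_cancel₀ hx, one_smul]⟩
  rw [map_smul_of_tower, norm_smul, Real.norm_of_nonneg (by positivity), inv_mul_cancel₀ hx]

section Seminorm

variable {E : Type*} [NormedAddCommGroup E] [InnerProductSpace ℂ E] {A : E →L[ℂ] E}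

theorem opnA_nonneg (X : E →L[ℂ] E) : 0 ≤ opnA A X :=
  Real.sSup_nonneg (by rintro _ ⟨x, -, rfl⟩; exact Real.sqrt_nonneg _)

theorem wA_nonneg (X : E →L[ℂ] E) : 0 ≤ wA A X :=
  Real.sSup_nonneg (by rintro _ ⟨x, -, rfl⟩; exact norm_nonneg _)

variable {P : E →L[ℂ] E} (hP : ∀ x y, ⟪A x, y⟫_ℂ = ⟪P x, P y⟫_ℂ)
include hP

theorem vnA_eq_norm (x : E) : vnA A x = ‖P x‖ := by
  rw [vnA, hP, inner_self_eq_norm_sq (𝕜 := ℂ), Real.sqrt_sq (norm_nonneg _)]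

theorem inner_apply_comm (x y : E) : ⟪A x, y⟫_ℂ = ⟪x, A y⟫_ℂ := by
  rw [hP, ← inner_conj_symm, ← hP, inner_conj_symm]

theorem opnA_le {X : E →L[ℂ] E} {m : ℝ} (hm : 0 ≤ m) (h : ∀ x, ‖P (X x)‖ ≤ m * ‖P x‖) :
    opnA A X ≤ m := by
  refine Real.sSup_le ?_ hm
  rintro _ ⟨x, hx, rfl⟩
  rw [Set.mem_ofPred_eq, vnA_eq_norm hP] at hx
  simpa [vnA_eq_norm hP, hx] using h x

theorem norm_apply_le_opnA_mul {X : E →L[ℂ] E} {C : ℝ} (hC : ∀ x, ‖P (X x)‖ ≤ C * ‖P x‖)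
    (x : E) : ‖P (X x)‖ ≤ opnA A X * ‖P x‖ := by
  by_cases hx : ‖P x‖ = 0
  · simpa [hx] using hC x
  obtain ⟨t, ht, y, hy, rfl⟩ := exists_eq_smul_of_norm_apply_ne_zero hx
  have hbdd : BddAbove ((fun x => vnA A (X x)) '' {x | vnA A x = 1}) := by
    refine ⟨C, ?_⟩
    rintro _ ⟨z, hz, rfl⟩
    rw [Set.mem_ofPred_eq, vnA_eq_norm hP] at hz
    simpa [vnA_eq_norm hP, hz] using hC z
  have hy' : ‖P (X y)‖ ≤ opnA A X :=
    vnA_eq_norm hP (X y) ▸ le_csSup hbdd ⟨y, by rwa [Set.mem_ofPred_eq, vnA_eq_norm hP], rfl⟩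
  simp only [map_smul_of_tower, norm_smul, Real.norm_of_nonneg ht.le, hy]
  nlinarith

theorem norm_inner_le_wA_mul {X : E →L[ℂ] E} {C : ℝ} (hC : ∀ x, ‖P (X x)‖ ≤ C * ‖P x‖)
    (x : E) : ‖⟪A (X x), x⟫_ℂ‖ ≤ wA A X * ‖P x‖ ^ 2 := by
  have hCS : ∀ x, ‖⟪A (X x), x⟫_ℂ‖ ≤ C * ‖P x‖ ^ 2 := fun x => by
    rw [hP, sq, ← mul_assoc]
    exact (norm_inner_le_norm _ _).trans (mul_le_mul_of_nonneg_right (hC x) (norm_nonneg _))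
  by_cases hx : ‖P x‖ = 0
  · simpa [hx] using hCS x
  obtain ⟨t, ht, y, hy, rfl⟩ := exists_eq_smul_of_norm_apply_ne_zero hx
  have hbdd : BddAbove ((fun x => ‖⟪A (X x), x⟫_ℂ‖) '' {x | vnA A x = 1}) := by
    refine ⟨C, ?_⟩
    rintro _ ⟨z, hz, rfl⟩
    rw [Set.mem_ofPred_eq, vnA_eq_norm hP] at hz
    simpa [hz] using hCS z
  have hy' : ‖⟪A (X y), y⟫_ℂ‖ ≤ wA A X :=
    le_csSup hbdd ⟨y, by rwa [Set.mem_ofPred_eq, vnA_eq_norm hP], rfl⟩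
  simp only [map_smul_of_tower, ← Complex.coe_smul, inner_smul_left, inner_smul_right,
    Complex.conj_ofReal, norm_mul, norm_smul, Complex.norm_real, Real.norm_of_nonneg ht.le, hy]
  nlinarith

end Seminorm

section IsSelfAdjA

variable {A S : H →L[ℂ] H}

theorem IsSelfAdjA.inner_apply_left (hS : IsSelfAdjA A S) (x y : H) :
    ⟪A (S x), y⟫_ℂ = ⟪A x, S y⟫_ℂ := by
  rw [← comp_apply A S, hS, comp_apply, adjoint_inner_left]

theorem IsSelfAdjA.inner_pow_apply_left (hS : IsSelfAdjA A S) (m : ℕ) (x y : H) :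
    ⟪A ((S ^ m) x), y⟫_ℂ = ⟪A x, (S ^ m) y⟫_ℂ := by
  induction m generalizing x with
  | zero => rfl
  | succ m ih =>
    conv_lhs => rw [pow_succ, mul_apply_eq_comp]
    rw [ih, hS.inner_apply_left, ← mul_apply_eq_comp, ← pow_succ']

variable {P : H →L[ℂ] H} (hP : ∀ x y, ⟪A x, y⟫_ℂ = ⟪P x, P y⟫_ℂ)
include hP

theorem IsSelfAdjA.norm_apply_le (hS : IsSelfAdjA A S) (x : H) : ‖P (S x)‖ ≤ ‖S‖ * ‖P x‖ := by
  set f : ℕ → ℝ := fun m => ‖P ((S ^ m) x)‖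
  have hsq : ∀ m, f m ^ 2 ≤ f 0 * f (2 * m) := fun m => by
    have h : f m ^ 2 = RCLike.re ⟪P x, P ((S ^ (2 * m)) x)⟫_ℂ := by
      rw [← hP, two_mul, pow_add, mul_apply_eq_comp, ← hS.inner_pow_apply_left, hP,
        inner_self_eq_norm_sq (𝕜 := ℂ)]
    rw [h]
    exact (RCLike.re_le_norm _).trans (norm_inner_le_norm _ _)
  have hiter : ∀ n : ℕ, f 1 ^ 2 ^ n ≤ f 0 ^ (2 ^ n - 1) * f (2 ^ n) := fun n => by
    induction n with
    | zero => simp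
    | succ n ih =>
      have hexp : 2 ^ (n + 1) - 1 = 2 * (2 ^ n - 1) + 1 := by
        have := n.one_le_two_pow; rw [pow_succ]; omega
      calc f 1 ^ 2 ^ (n + 1) = (f 1 ^ 2 ^ n) ^ 2 := by rw [pow_succ, pow_mul]
        _ ≤ (f 0 ^ (2 ^ n - 1) * f (2 ^ n)) ^ 2 := by gcongr
        _ = (f 0 ^ (2 ^ n - 1)) ^ 2 * f (2 ^ n) ^ 2 := by ring
        _ ≤ (f 0 ^ (2 ^ n - 1)) ^ 2 * (f 0 * f (2 * 2 ^ n)) := by gcongr; exact hsq _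
        _ = f 0 ^ (2 ^ (n + 1) - 1) * f (2 ^ (n + 1)) := by rw [hexp, ← pow_succ']; ring
  have hgrowth : ∀ n : ℕ, f (2 ^ n) ≤ ‖P‖ * ‖x‖ * ‖S‖ ^ 2 ^ n := fun n => by
    calc f (2 ^ n) ≤ ‖P‖ * (‖S ^ 2 ^ n‖ * ‖x‖) :=
          (P.le_opNorm _).trans (by gcongr; exact le_opNorm _ _)
      _ ≤ ‖P‖ * (‖S‖ ^ 2 ^ n * ‖x‖) := by gcongr; exact norm_pow_le' S (by positivity)
      _ = ‖P‖ * ‖x‖ * ‖S‖ ^ 2 ^ n := by ring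
  refine le_of_forall_pow_two_pow_le (K := ‖P‖ * ‖x‖ * ‖S‖) (by positivity) fun n => ?_
  calc f 1 ^ 2 ^ n ≤ f 0 ^ (2 ^ n - 1) * (‖P‖ * ‖x‖ * ‖S‖ ^ 2 ^ n) :=
        (hiter n).trans (by gcongr; exact hgrowth n)
    _ = ‖P‖ * ‖x‖ * ‖S‖ * (‖S‖ * f 0) ^ (2 ^ n - 1) := by
        obtain ⟨N, hN⟩ : ∃ N, 2 ^ n = N + 1 := ⟨_, (Nat.sub_add_cancel n.one_le_two_pow).symm⟩
        rw [hN, Nat.add_sub_cancel]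
        ring

theorem IsSelfAdjA.four_mul_re_inner_eq (hS : IsSelfAdjA A S) (a b : H) :
    4 * (⟪A (S a), b⟫_ℂ).re = (⟪A (S (a + b)), a + b⟫_ℂ).re - (⟪A (S (a - b)), a - b⟫_ℂ).re := by
  have hba : ⟪A (S b), a⟫_ℂ = conj ⟪A (S a), b⟫_ℂ := by
    rw [hS.inner_apply_left, inner_apply_comm hP, inner_conj_symm]
  simp only [map_add, map_sub, inner_add_left, inner_add_right, inner_sub_left, inner_sub_right,
    hba, Complex.add_re, Complex.sub_re, Complex.conj_re]
  ring

theorem IsSelfAdjA.norm_apply_le_of_abs_re_inner_le (hS : IsSelfAdjA A S) {m : ℝ} (hm : 0 ≤ m)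
    (h : ∀ u, |(⟪A (S u), u⟫_ℂ).re| ≤ m * ‖P u‖ ^ 2) (x : H) : ‖P (S x)‖ ≤ m * ‖P x‖ := by
  have hbdd := hS.norm_apply_le hP x
  obtain ⟨N, hN⟩ : ∃ N, ‖P (S x)‖ = N := ⟨_, rfl⟩
  obtain ⟨p, hp⟩ : ∃ p, ‖P x‖ = p := ⟨_, rfl⟩
  have hN0 : 0 ≤ N := hN ▸ norm_nonneg _
  have hp0 : 0 ≤ p := hp ▸ norm_nonneg _
  rw [hN, hp] at hbdd ⊢
  -- polarization at `a = N • x`, `b = p • S x`, which makes both sides homogeneous of degree 4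
  have hpol :
      4 * (N * p * N ^ 2) ≤ m * (‖P (N • x + p • S x)‖ ^ 2 + ‖P (N • x - p • S x)‖ ^ 2) := by
    have hlhs : (⟪A (S (N • x)), p • S x⟫_ℂ).re = N * p * N ^ 2 := by
      rw [map_smul_of_tower, map_smul_of_tower, RCLike.real_smul_eq_coe_smul (K := ℂ),
        RCLike.real_smul_eq_coe_smul (K := ℂ) p, inner_smul_real_left, inner_smul_real_right,
        smul_smul, Complex.smul_re, hP, ← RCLike.re_eq_complex_re, inner_self_eq_norm_sq, hN]
      ring
    rw [← hlhs, hS.four_mul_re_inner_eq hP]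
    have h₁ := (abs_le.mp (h (N • x + p • S x))).2
    have h₂ := (abs_le.mp (h (N • x - p • S x))).1
    linarith
  have hpar : ‖P (N • x + p • S x)‖ ^ 2 + ‖P (N • x - p • S x)‖ ^ 2 = 4 * (N ^ 2 * p ^ 2) := by
    have := parallelogram_law_with_norm ℂ (P (N • x)) (P (p • S x))
    simp only [map_add, map_sub, map_smul_of_tower, norm_smul, hN, hp, Real.norm_of_nonneg hN0,
      Real.norm_of_nonneg hp0] at this ⊢
    nlinarith
  rw [hpar] at hpol
  rcases hp0.eq_or_lt with rfl | hp0
  · linarith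
  rcases hN0.eq_or_lt with rfl | hN0
  · positivity
  nlinarith [mul_pos (mul_pos hN0 hN0) hp0]

theorem IsSelfAdjA.norm_apply_add_sq_le (hS : IsSelfAdjA A S) (Y : H →L[ℂ] H) (a b : H) :
    ‖P (S a + Y b)‖ ^ 2 ≤ ‖P (S a)‖ ^ 2 + ‖P (Y b)‖ ^ 2 + 2 * (‖P a‖ * ‖P (S (Y b))‖) := by
  have hcross : ⟪P (S a), P (Y b)⟫_ℂ = ⟪P a, P (S (Y b))⟫_ℂ := by
    rw [← hP, ← hP, hS.inner_apply_left]
  rw [map_add, norm_add_sq (𝕜 := ℂ), hcross]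
  have := (RCLike.re_le_norm _).trans (norm_inner_le_norm (𝕜 := ℂ) (P a) (P (S (Y b))))
  linarith

theorem IsSelfAdjA.norm_apply_comp_self_add_comp_self_le {R J : H →L[ℂ] H}
    (hR : IsSelfAdjA A R) (hJ : IsSelfAdjA A J) {r s c : ℝ}
    (hr : ∀ x, ‖P (R x)‖ ≤ r * ‖P x‖) (hs : ∀ x, ‖P (J x)‖ ≤ s * ‖P x‖)
    (hc : ∀ x, ‖P (R (J x))‖ ≤ c * ‖P x‖) (x : H) :
    ‖P ((R ∘L R + J ∘L J) x)‖ ≤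
      (r ^ 2 + s ^ 2 + √((r ^ 2 - s ^ 2) ^ 2 + 4 * c ^ 2)) / 2 * ‖P x‖ := by
  set μ := (r ^ 2 + s ^ 2 + √((r ^ 2 - s ^ 2) ^ 2 + 4 * c ^ 2)) / 2
  set u := ‖P (R x)‖
  set v := ‖P (J x)‖
  have hμ : 0 ≤ μ := by positivity
  have hquad : ‖P ((R ∘L R + J ∘L J) x)‖ ^ 2 ≤ μ * (u ^ 2 + v ^ 2) := by
    refine ((hR.norm_apply_add_sq_le hP J (R x) (J x)).trans ?_).trans
      (quadForm_le_of_eigenvalue _ _ c u v)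
    have hRR := pow_le_pow_left₀ (norm_nonneg _) (hr (R x)) 2
    have hJJ := pow_le_pow_left₀ (norm_nonneg _) (hs (J x)) 2
    have hRJ := mul_le_mul_of_nonneg_left (hc (J x)) (norm_nonneg (P (R x)))
    nlinarith
  have hform : u ^ 2 + v ^ 2 ≤ ‖P ((R ∘L R + J ∘L J) x)‖ * ‖P x‖ := by
    have h : ((u ^ 2 + v ^ 2 : ℝ) : ℂ) = ⟪P ((R ∘L R + J ∘L J) x), P x⟫_ℂ := by
      rw [← hP, add_apply, map_add, inner_add_left, comp_apply, comp_apply, hR.inner_apply_left,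
        hJ.inner_apply_left, hP, hP, inner_self_eq_norm_sq_to_K, inner_self_eq_norm_sq_to_K]
      push_cast
      rfl
    rw [← Complex.ofReal_re (u ^ 2 + v ^ 2), h]
    exact (Complex.re_le_norm _).trans (norm_inner_le_norm _ _)
  nlinarith [mul_le_mul_of_nonneg_left hform hμ, mul_nonneg hμ (norm_nonneg (P x))]

theorem IsSelfAdjA.opnA_le_wA (hS : IsSelfAdjA A S) {T : H →L[ℂ] H} {C : ℝ}
    (hT : ∀ x, ‖P (T x)‖ ≤ C * ‖P x‖) (h : ∀ u, |(⟪A (S u), u⟫_ℂ).re| ≤ ‖⟪A (T u), u⟫_ℂ‖) :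
    opnA A S ≤ wA A T :=
  opnA_le hP (wA_nonneg T) <| hS.norm_apply_le_of_abs_re_inner_le hP (wA_nonneg T) fun u =>
    (h u).trans (norm_inner_le_wA_mul hP hT u)

end IsSelfAdjA

section ReImDecomposition

variable {E : Type*} [NormedAddCommGroup E] [InnerProductSpace ℂ E] (T Ts : E →L[ℂ] E)

theorem ReA_add_I_smul_ImA : ReA T Ts + Complex.I • ImA T Ts = T := by
  have h : Complex.I * (2 * Complex.I)⁻¹ = 2⁻¹ := by field_simp
  rw [ReA, ImA, smul_smul, h]
  module

theorem ReA_sub_I_smul_ImA : ReA T Ts - Complex.I • ImA T Ts = Ts := by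
  have h : Complex.I * (2 * Complex.I)⁻¹ = 2⁻¹ := by field_simp
  rw [ReA, ImA, smul_smul, h]
  module

theorem comp_add_comp_eq_two_smul :
    Ts ∘L T + T ∘L Ts = (2 : ℂ) • (ReA T Ts ∘L ReA T Ts + ImA T Ts ∘L ImA T Ts) := by
  have key : ∀ R J : E →L[ℂ] E, (R - Complex.I • J) ∘L (R + Complex.I • J) +
      (R + Complex.I • J) ∘L (R - Complex.I • J) = (2 : ℂ) • (R ∘L R + J ∘L J) := fun R J => by
    simp only [← mul_def, mul_add, add_mul, mul_sub, sub_mul, smul_mul_assoc, mul_smul_comm]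
    linear_combination (norm := module) ((-2 : ℂ) * Complex.I_sq) • (J * J)
  simpa only [ReA_add_I_smul_ImA, ReA_sub_I_smul_ImA] using key (ReA T Ts) (ImA T Ts)

end ReImDecomposition

section IsReducedAdjA

variable {A T Ts : H →L[ℂ] H}

theorem IsReducedAdjA.mul_eq_star_mul (hA : IsSelfAdjoint A) (hTs : IsReducedAdjA A T Ts) :
    A * T = star Ts * A := by
  have h₁ : A * Ts = star T * A := hTs.1
  rw [← star_star T, ← hA.star_eq, ← star_mul, ← h₁, star_mul, hA.star_eq]

theorem IsReducedAdjA.isSelfAdjA_ReA (hA : IsSelfAdjoint A) (hTs : IsReducedAdjA A T Ts) :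
    IsSelfAdjA A (ReA T Ts) := by
  change A * ReA T Ts = star (ReA T Ts) * A
  have h₁ : A * Ts = star T * A := hTs.1
  simp only [ReA, star_smul, star_add, mul_smul_comm, smul_mul_assoc, mul_add, add_mul, h₁,
    hTs.mul_eq_star_mul hA, star_inv₀, star_ofNat]
  rw [add_comm]

theorem IsReducedAdjA.isSelfAdjA_ImA (hA : IsSelfAdjoint A) (hTs : IsReducedAdjA A T Ts) :
    IsSelfAdjA A (ImA T Ts) := by
  change A * ImA T Ts = star (ImA T Ts) * A
  have h₁ : A * Ts = star T * A := hTs.1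
  simp only [ImA, star_smul, star_sub, mul_smul_comm, smul_mul_assoc, mul_sub, sub_mul, h₁,
    hTs.mul_eq_star_mul hA, star_inv₀, star_mul', star_ofNat, Complex.star_def, Complex.conj_I]
  module

variable {P : H →L[ℂ] H} (hP : ∀ x y, ⟪A x, y⟫_ℂ = ⟪P x, P y⟫_ℂ)
include hP

theorem IsReducedAdjA.inner_apply_eq_conj (hTs : IsReducedAdjA A T Ts) (u : H) :
    ⟪A (Ts u), u⟫_ℂ = conj ⟪A (T u), u⟫_ℂ := by
  rw [← comp_apply A Ts, hTs.1, comp_apply, adjoint_inner_left, inner_apply_comm hP,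
    inner_conj_symm]

theorem IsReducedAdjA.re_inner_ReA (hTs : IsReducedAdjA A T Ts) (u : H) :
    (⟪A (ReA T Ts u), u⟫_ℂ).re = (⟪A (T u), u⟫_ℂ).re := by
  simp [ReA, hTs.inner_apply_eq_conj hP, -inner_conj_symm]
  ring

theorem IsReducedAdjA.re_inner_ImA (hTs : IsReducedAdjA A T Ts) (u : H) :
    (⟪A (ImA T Ts u), u⟫_ℂ).re = -(⟪A (T u), u⟫_ℂ).im := by
  simp only [ImA, smul_apply, sub_apply, map_smul, map_sub, inner_smul_left, inner_sub_left,
    hTs.inner_apply_eq_conj hP]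
  simp [Complex.mul_re, -inner_conj_symm]
  ring

theorem IsReducedAdjA.norm_apply_le (hA : IsSelfAdjoint A) (hTs : IsReducedAdjA A T Ts) (x : H) :
    ‖P (T x)‖ ≤ (‖ReA T Ts‖ + ‖ImA T Ts‖) * ‖P x‖ := by
  conv_lhs => rw [← ReA_add_I_smul_ImA T Ts]
  rw [add_apply, smul_apply, map_add, map_smul, add_mul]
  refine (norm_add_le _ _).trans (add_le_add ((hTs.isSelfAdjA_ReA hA).norm_apply_le hP x) ?_)
  rw [norm_smul, Complex.norm_I, one_mul]
  exact (hTs.isSelfAdjA_ImA hA).norm_apply_le hP x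

theorem IsReducedAdjA.opnA_ReA_le_wA (hA : IsSelfAdjoint A) (hTs : IsReducedAdjA A T Ts) :
    opnA A (ReA T Ts) ≤ wA A T :=
  (hTs.isSelfAdjA_ReA hA).opnA_le_wA hP (hTs.norm_apply_le hP hA) fun u => by
    rw [hTs.re_inner_ReA hP]
    exact Complex.abs_re_le_norm _

theorem IsReducedAdjA.opnA_ImA_le_wA (hA : IsSelfAdjoint A) (hTs : IsReducedAdjA A T Ts) :
    opnA A (ImA T Ts) ≤ wA A T :=
  (hTs.isSelfAdjA_ImA hA).opnA_le_wA hP (hTs.norm_apply_le hP hA) fun u => by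
    rw [hTs.re_inner_ImA hP, abs_neg]
    exact Complex.abs_im_le_norm _

end IsReducedAdjA

theorem stmt2_general (A T Ts : H →L[ℂ] H) (hA : A.IsPositive)
    (hTs : IsReducedAdjA A T Ts) :
    (1/4) * opnA A (Ts ∘L T + T ∘L Ts) ≤ (1/4) * (2 * (wA A T)^2 + Real.sqrt (((opnA A (ReA T Ts))^2 - (opnA A (ImA T Ts))^2)^2 + 4 * (opnA A (ReA T Ts ∘L ImA T Ts))^2)) ∧
    (1/4) * (2 * (wA A T)^2 + Real.sqrt (((opnA A (ReA T Ts))^2 - (opnA A (ImA T Ts))^2)^2 + 4 * (opnA A (ReA T Ts ∘L ImA T Ts))^2)) ≤ (wA A T)^2 := by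
  obtain ⟨P, hP⟩ : ∃ P : H →L[ℂ] H, ∀ x y, ⟪A x, y⟫_ℂ = ⟪P x, P y⟫_ℂ :=
    ⟨_, hA.inner_apply_eq_inner_sqrt⟩
  have hR := hTs.isSelfAdjA_ReA hA.isSelfAdjoint
  have hJ := hTs.isSelfAdjA_ImA hA.isSelfAdjoint
  set r := opnA A (ReA T Ts)
  set s := opnA A (ImA T Ts)
  set c := opnA A (ReA T Ts ∘L ImA T Ts)
  have hr : 0 ≤ r := opnA_nonneg _
  have hs : 0 ≤ s := opnA_nonneg _
  have hc : 0 ≤ c := opnA_nonneg _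
  have bR : ∀ x, ‖P (ReA T Ts x)‖ ≤ r * ‖P x‖ := norm_apply_le_opnA_mul hP (hR.norm_apply_le hP)
  have bJ : ∀ x, ‖P (ImA T Ts x)‖ ≤ s * ‖P x‖ := norm_apply_le_opnA_mul hP (hJ.norm_apply_le hP)
  have bRJ : ∀ x, ‖P (ReA T Ts (ImA T Ts x))‖ ≤ r * s * ‖P x‖ := fun x =>
    (bR _).trans (by rw [mul_assoc]; exact mul_le_mul_of_nonneg_left (bJ x) hr)
  have hcrs : c ≤ r * s := opnA_le hP (mul_nonneg hr hs) bRJ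
  have hQ : opnA A (Ts ∘L T + T ∘L Ts) ≤ r ^ 2 + s ^ 2 + √((r ^ 2 - s ^ 2) ^ 2 + 4 * c ^ 2) := by
    refine opnA_le hP (by positivity) fun x => ?_
    rw [comp_add_comp_eq_two_smul, smul_apply, map_smul, norm_smul, Complex.norm_two]
    have := hR.norm_apply_comp_self_add_comp_self_le hP hJ bR bJ
      (norm_apply_le_opnA_mul hP (X := ReA T Ts ∘L ImA T Ts) bRJ) x
    linarith
  have hE : √((r ^ 2 - s ^ 2) ^ 2 + 4 * c ^ 2) ≤ r ^ 2 + s ^ 2 :=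
    (Real.sqrt_le_left (by positivity)).mpr (by nlinarith [mul_le_mul hcrs hcrs hc (by positivity)])
  have hrw := hTs.opnA_ReA_le_wA hP hA.isSelfAdjoint
  have hsw := hTs.opnA_ImA_le_wA hP hA.isSelfAdjoint
  constructor <;> nlinarith

theorem stmt2 (A T Ts : H →L[ℂ] H) (hA : A.IsPositive) (hA0 : A ≠ 0)
    (hTs : IsReducedAdjA A T Ts) :
    (1/4) * opnA A (Ts ∘L T + T ∘L Ts) ≤ (1/4) * (2 * (wA A T)^2 + Real.sqrt (((opnA A (ReA T Ts))^2 - (opnA A (ImA T Ts))^2)^2 + 4 * (opnA A (ReA T Ts ∘L ImA T Ts))^2)) ∧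
    (1/4) * (2 * (wA A T)^2 + Real.sqrt (((opnA A (ReA T Ts))^2 - (opnA A (ImA T Ts))^2)^2 + 4 * (opnA A (ReA T Ts ∘L ImA T Ts))^2)) ≤ (wA A T)^2 :=
  stmt2_general A T Ts hA hTs
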